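/- arXiv:1308.6614 — 2 statements merged into one kernel-verified Lean document; each statement's English description precedes it below -/
import Mathlib

section
/- Let μ be a probability measure on the unit circle 𝕋 with infinite support, let n ≥ 1, let Φ_n be the n-th monic orthogonal polynomial of μ, let φ_0,…,φ_{n−1} be orthonormal polynomials of μ, and let K_{n−1}(ξ,z) = Σ_{j=0}^{n−1} conj(φ_j(ξ))·φ_j(z). For t ∈ (0,1), set μ(t) = (1−t)·μ + t·δ_1, where δ_1 is the unit point mass at z = 1. Then the polynomial Φ_n(z) − t·Φ_n(1)·K_{n−1}(1,z)/(1 − t + t·K_{n−1}(1,1)) is monic of degree n and is orthogonal to z^j in L²(μ(t)) for j = 0,…,n−1; i.e., it equals the n-th monic orthogonal polynomial Φ_n(·;μ(t)). -/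
/-!
Write `S = K_{n-1}(1, ·)` and `c = t Φ_n(1) / (1 - t + t K_{n-1}(1,1))`, so that `Ψ = Φ_n - c S`.
Since `deg S < n`, `Ψ` is monic of degree `n`. The `φ_j`, `j < n`, span the polynomials of
degree `< n`, so `S` reproduces their values at `1`: `∫ S conj p dμ = conj (p 1)`. Hence
`∫ Ψ conj (z^j) dμ = -c` while `Ψ(1) = Φ_n(1) - c K_{n-1}(1,1)`, and the integral against `μ(t)` is
`(1 - t)(-c) + t Ψ(1) = t Φ_n(1) - c (1 - t + t K_{n-1}(1,1)) = 0`; the denominator is nonzero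
because `K_{n-1}(1,1) ≥ 0`.
-/

open MeasureTheory Polynomial ComplexConjugate

def OnCircle (μ : Measure ℂ) : Prop := μ {z : ℂ | ‖z‖ ≠ 1} = 0

open Finset Submodule

theorem OnCircle.integrable_of_continuous {μ : Measure ℂ} [IsFiniteMeasure μ] (hμ : OnCircle μ)
    {E : Type*} [NormedAddCommGroup E] {f : ℂ → E} (hf : Continuous f) : Integrable f μ := by
  obtain ⟨C, hC⟩ := (isCompact_sphere (0 : ℂ) 1).exists_bound_of_continuousOn hf.continuousOn
  have hsphere : ∀ᵐ z ∂μ, z ∈ Metric.sphere (0 : ℂ) 1 := by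
    rw [ae_iff]
    simpa [OnCircle] using hμ
  exact Integrable.mono' (integrable_const C) hf.aestronglyMeasurable (hsphere.mono hC)

theorem OnCircle.integrable_eval_mul_conj_eval {μ : Measure ℂ} [IsFiniteMeasure μ]
    (hμ : OnCircle μ) (p q : ℂ[X]) :
    Integrable (fun z => p.eval z * conj (q.eval z)) μ :=
  hμ.integrable_of_continuous (p.continuous.mul (Complex.continuous_conj.comp q.continuous))

theorem integral_smul_add_smul_dirac {α E : Type*} [MeasurableSpace α]
    [MeasurableSingletonClass α] [NormedAddCommGroup E] [NormedSpace ℝ E] [CompleteSpace E]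
    {μ : Measure α} {f : α → E} (hf : Integrable f μ) {s t : ℝ} (hs : 0 ≤ s) (ht : 0 ≤ t) (a : α) :
    ∫ x, f x ∂(ENNReal.ofReal s • μ + ENNReal.ofReal t • Measure.dirac a)
      = s • ∫ x, f x ∂μ + t • f a := by
  rw [integral_add_measure (hf.smul_measure ENNReal.ofReal_ne_top)
      ((integrable_dirac enorm_lt_top).smul_measure ENNReal.ofReal_ne_top),
    integral_smul_measure, integral_smul_measure, integral_dirac,
    ENNReal.toReal_ofReal hs, ENNReal.toReal_ofReal ht]

theorem Polynomial.span_image_Iio_eq_degreeLT {K : Type*} [Field K] {φ : ℕ → K[X]} {n : ℕ}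
    (hdeg : ∀ j < n, (φ j).degree = j) : span K (φ '' Set.Iio n) = degreeLT K n := by
  classical
  -- extend `φ` beyond `n` by monomials to get a polynomial sequence
  let S : Sequence K :=
    { elems' := fun j => if j < n then φ j else X ^ j
      degree_eq' := fun j => by split_ifs with hj <;> simp [hdeg, hj] }
  have hS : S '' Set.Iio n = φ '' Set.Iio n :=
    Set.image_congr fun j hj => if_pos hj
  rw [← hS]
  exact S.span_degreeLT fun j _ => (leadingCoeff_ne_zero.2 (S.ne_zero j)).isUnit

/-- The Christoffel–Darboux kernel `z ↦ K_{n-1}(ξ, z)` as a polynomial. -/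
noncomputable def christoffelDarboux (φ : ℕ → ℂ[X]) (n : ℕ) (ξ : ℂ) : ℂ[X] :=
  ∑ j ∈ range n, C (conj ((φ j).eval ξ)) * φ j

section christoffelDarboux

variable {φ : ℕ → ℂ[X]} {n : ℕ}

theorem eval_christoffelDarboux (ξ z : ℂ) :
    (christoffelDarboux φ n ξ).eval z = ∑ j ∈ range n, conj ((φ j).eval ξ) * (φ j).eval z := by
  simp [christoffelDarboux, eval_finsetSum]

theorem eval_christoffelDarboux_self (ξ : ℂ) :
    (christoffelDarboux φ n ξ).eval ξ =
      ((∑ j ∈ range n, Complex.normSq ((φ j).eval ξ) : ℝ) : ℂ) := by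
  rw [eval_christoffelDarboux]
  push_cast
  exact sum_congr rfl fun j _ => by rw [mul_comm, Complex.mul_conj]

theorem one_sub_add_mul_eval_christoffelDarboux_self_ne_zero (ξ : ℂ) {t : ℝ} (ht0 : 0 ≤ t)
    (ht1 : t < 1) : 1 - (t : ℂ) + t * (christoffelDarboux φ n ξ).eval ξ ≠ 0 := by
  rw [eval_christoffelDarboux_self]
  set r := ∑ j ∈ range n, Complex.normSq ((φ j).eval ξ)
  have hr : 0 ≤ r := sum_nonneg fun j _ => Complex.normSq_nonneg _
  exact_mod_cast (by nlinarith : 0 < 1 - t + t * r).ne'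

theorem degree_christoffelDarboux_lt (hdeg : ∀ j < n, (φ j).natDegree < n) (ξ : ℂ) :
    (christoffelDarboux φ n ξ).degree < n := by
  refine (degree_sum_le _ _).trans_lt
    ((Finset.sup_lt_iff (WithBot.bot_lt_coe n)).2 fun j hj => ?_)
  exact degree_le_natDegree.trans_lt
    (WithBot.coe_lt_coe.2 ((natDegree_C_mul_le _ _).trans_lt (hdeg j (mem_range.1 hj))))

variable {μ : Measure ℂ} [IsFiniteMeasure μ]

theorem integral_christoffelDarboux_mul_conj_eval
    (horth : ∀ j < n, ∀ k < n, ∫ z, (φ j).eval z * conj ((φ k).eval z) ∂μ = if j = k then 1 else 0)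
    (hμ : OnCircle μ) (ξ : ℂ) {k : ℕ} (hk : k < n) :
    ∫ z, (christoffelDarboux φ n ξ).eval z * conj ((φ k).eval z) ∂μ = conj ((φ k).eval ξ) := by
  simp_rw [eval_christoffelDarboux, sum_mul, mul_assoc]
  rw [integral_finsetSum _ fun j _ => (hμ.integrable_eval_mul_conj_eval _ _).const_mul _]
  simp_rw [integral_const_mul]
  rw [sum_eq_single_of_mem k (mem_range.2 hk) fun j hj hjk => by
    rw [horth j (mem_range.1 hj) k hk, if_neg hjk, mul_zero]]
  rw [horth k hk k hk, if_pos rfl, mul_one]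

theorem integral_christoffelDarboux_mul_conj
    (horth : ∀ j < n, ∀ k < n, ∫ z, (φ j).eval z * conj ((φ k).eval z) ∂μ = if j = k then 1 else 0)
    (hμ : OnCircle μ) (ξ : ℂ) {p : ℂ[X]}
    (hp : p ∈ span ℂ (φ '' Set.Iio n)) :
    ∫ z, (christoffelDarboux φ n ξ).eval z * conj (p.eval z) ∂μ = conj (p.eval ξ) := by
  induction hp using span_induction with
  | mem p hp =>
    obtain ⟨k, hk, rfl⟩ := hp
    exact integral_christoffelDarboux_mul_conj_eval horth hμ ξ hk
  | zero => simp
  | add p q _ _ hp hq =>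
    simp_rw [eval_add, map_add, mul_add]
    rw [integral_add (hμ.integrable_eval_mul_conj_eval _ _)
      (hμ.integrable_eval_mul_conj_eval _ _), hp, hq]
  | smul a p _ hp =>
    simp_rw [eval_smul, smul_eq_mul, map_mul, mul_left_comm _ (conj a)]
    rw [integral_const_mul, hp]

theorem integral_christoffelDarboux_mul_conj_of_degree_lt
    (horth : ∀ j < n, ∀ k < n, ∫ z, (φ j).eval z * conj ((φ k).eval z) ∂μ = if j = k then 1 else 0)
    (hdeg : ∀ j < n, (φ j).natDegree = j) (hμ : OnCircle μ) (ξ : ℂ) {p : ℂ[X]}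
    (hp : p.degree < n) :
    ∫ z, (christoffelDarboux φ n ξ).eval z * conj (p.eval z) ∂μ = conj (p.eval ξ) := by
  have hne : ∀ k < n, φ k ≠ 0 := fun k hk h0 => by simpa [h0] using horth k hk k hk
  refine integral_christoffelDarboux_mul_conj horth hμ ξ ?_
  rw [span_image_Iio_eq_degreeLT fun k hk => by rw [degree_eq_natDegree (hne k hk), hdeg k hk]]
  exact mem_degreeLT.2 hp

end christoffelDarboux

theorem add_mass_at_one_orthogonal_general (μ : Measure ℂ) [IsProbabilityMeasure μ]
    (hcirc : OnCircle μ)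
    (n : ℕ)
    (φ : ℕ → Polynomial ℂ)
    (hφdeg : ∀ j < n, (φ j).natDegree = j)
    (hφorth : ∀ j < n, ∀ k < n,
      ∫ z, (φ j).eval z * conj ((φ k).eval z) ∂μ = if j = k then 1 else 0)
    (Φ : Polynomial ℂ) (hΦmonic : Φ.Monic) (hΦdeg : Φ.natDegree = n)
    (hΦorth : ∀ j < n, ∫ z, Φ.eval z * conj (z ^ j) ∂μ = 0)
    (K : ℂ → ℂ → ℂ)
    (hK : ∀ x z : ℂ, K x z = ∑ j ∈ Finset.range n, conj ((φ j).eval x) * (φ j).eval z)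
    (t : ℝ) (ht : t ∈ Set.Ioo (0 : ℝ) 1)
    (μt : Measure ℂ)
    (hμt : μt = ENNReal.ofReal (1 - t) • μ + ENNReal.ofReal t • Measure.dirac (1 : ℂ))
    (Ψ : Polynomial ℂ)
    (hΨ : Ψ = Φ - Polynomial.C ((t : ℂ) * Φ.eval 1 / (1 - (t : ℂ) + (t : ℂ) * K 1 1)) *
        ∑ j ∈ Finset.range n, Polynomial.C (conj ((φ j).eval 1)) * φ j) :
    Ψ.Monic ∧ Ψ.natDegree = n ∧ ∀ j < n, ∫ z, Ψ.eval z * conj (z ^ j) ∂μt = 0 := by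
  obtain ⟨ht0, ht1⟩ := ht
  set S := christoffelDarboux φ n 1
  set c := (t : ℂ) * Φ.eval 1 / (1 - (t : ℂ) + (t : ℂ) * K 1 1)
  have hΨS : Ψ = Φ - C c * S := hΨ
  have hSdeg : S.degree < n :=
    degree_christoffelDarboux_lt (fun j hj => (hφdeg j hj).trans_lt hj) 1
  have hlower : (C c * S).degree < Φ.degree := by
    rw [degree_eq_natDegree hΦmonic.ne_zero, hΦdeg, ← smul_eq_C_mul]
    exact (degree_smul_le c S).trans_lt hSdeg
  refine ⟨hΨS ▸ hΦmonic.sub_of_left hlower,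
    hΨS ▸ hΦdeg ▸ natDegree_eq_of_degree_eq (degree_sub_eq_left_of_degree_lt hlower),
    fun j hj => ?_⟩
  have hSorth : ∫ z, S.eval z * conj (z ^ j) ∂μ = 1 := by
    simpa using integral_christoffelDarboux_mul_conj_of_degree_lt hφorth hφdeg hcirc 1
      (p := X ^ j) (by rw [degree_X_pow]; exact_mod_cast hj)
  have hint : ∀ p : ℂ[X], Integrable (fun z => p.eval z * conj (z ^ j)) μ := fun p =>
    hcirc.integrable_of_continuous (by fun_prop)
  have hΨμ : ∫ z, Ψ.eval z * conj (z ^ j) ∂μ = -c := by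
    simp_rw [hΨS, eval_sub, eval_mul, eval_C, sub_mul, mul_assoc]
    rw [integral_sub (hint Φ) ((hint S).const_mul c), integral_const_mul, hΦorth j hj, hSorth,
      mul_one, zero_sub]
  have hK11 : K 1 1 = S.eval 1 := (hK 1 1).trans (eval_christoffelDarboux 1 1).symm
  have hD : 1 - (t : ℂ) + t * K 1 1 ≠ 0 :=
    hK11 ▸ one_sub_add_mul_eval_christoffelDarboux_self_ne_zero 1 ht0.le ht1
  rw [hμt, integral_smul_add_smul_dirac (hint Ψ) (by linarith) ht0.le, hΨμ, hΨS]
  simp only [eval_sub, eval_mul, eval_C, one_pow, map_one, mul_one, ← hK11, c, Complex.real_smul]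
  field_simp
  push_cast
  ring

/-- for `μ(t) = (1−t)μ + t δ_1`, the polynomial
`Φ_n(z) − t Φ_n(1) K_{n−1}(1,z)/(1−t+tK_{n−1}(1,1))` is monic of degree `n` and
orthogonal to `z^j`, `j < n`, in `L²(μ(t))`. -/
theorem add_mass_at_one_orthogonal (μ : Measure ℂ) [IsProbabilityMeasure μ]
    (hcirc : OnCircle μ)
    (hsupp : {z : ℂ | ∀ ε > 0, 0 < μ (Metric.ball z ε)}.Infinite)
    (n : ℕ) (hn : 1 ≤ n)
    (φ : ℕ → Polynomial ℂ)
    (hφdeg : ∀ j < n, (φ j).natDegree = j)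
    (hφorth : ∀ j < n, ∀ k < n,
      ∫ z, (φ j).eval z * conj ((φ k).eval z) ∂μ = if j = k then 1 else 0)
    (Φ : Polynomial ℂ) (hΦmonic : Φ.Monic) (hΦdeg : Φ.natDegree = n)
    (hΦorth : ∀ j < n, ∫ z, Φ.eval z * conj (z ^ j) ∂μ = 0)
    (K : ℂ → ℂ → ℂ)
    (hK : ∀ x z : ℂ, K x z = ∑ j ∈ Finset.range n, conj ((φ j).eval x) * (φ j).eval z)
    (t : ℝ) (ht : t ∈ Set.Ioo (0 : ℝ) 1)
    (μt : Measure ℂ)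
    (hμt : μt = ENNReal.ofReal (1 - t) • μ + ENNReal.ofReal t • Measure.dirac (1 : ℂ))
    (Ψ : Polynomial ℂ)
    (hΨ : Ψ = Φ - Polynomial.C ((t : ℂ) * Φ.eval 1 / (1 - (t : ℂ) + (t : ℂ) * K 1 1)) *
        ∑ j ∈ Finset.range n, Polynomial.C (conj ((φ j).eval 1)) * φ j) :
    Ψ.Monic ∧ Ψ.natDegree = n ∧ ∀ j < n, ∫ z, Ψ.eval z * conj (z ^ j) ∂μt = 0 :=
  add_mass_at_one_orthogonal_general μ hcirc n φ hφdeg hφorth Φ hΦmonic hΦdeg hΦorth K hK t ht μt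
    hμt Ψ hΨ
end

section
/- Let δ > 0, m > 0, n ≥ 1, and let σ be the measure on the unit circle 𝕋 given by dσ = (δ/(2π))·dθ + m·Σ_{k=1}^{n} δ_{ε_k}, where ε_k = e^{2πik/(n+1)} for k = 1,…,n. Then the polynomial Φ_n(z) = (m/(δ+m))·(1 + z + … + z^n) + (δ/(δ+m))·z^n is monic of degree n and satisfies: (i) ∫_𝕋 Φ_n(z)·conj(z^j) dσ(z) = 0 for j = 0,…,n−1; (ii) Φ_n(1) = 1 + mn/(δ+m) = sup_{z∈𝕋}|Φ_n(z)|; and (iii) ∫_𝕋 |Φ_n|² dσ = δ·(1 + mn/(δ+m)). -/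
/-!
Write `Φ_n = c Π_n + d z^n` with `c = m/(δ+m)`, `d = δ/(δ+m)`, so `c + d = 1` and `Φ_n` is monic.
The monomials are orthogonal for `dθ`, so the arc part of `∫ Φ_n z̄^j dσ` is `δ · coeff_j Φ_n`.
At a nontrivial root of unity `ζ = ε_k` we have `Π_n(ζ) = 0` and `Φ_n(ζ) = d ζ^n = d ζ̄`, so the
atoms contribute `m d ∑_k ε̄_k^(j+1)`, which is `-m d` for `j < n` and `m d n` for `j = n`.
Hence `∫ Φ_n z̄^j dσ = δ c - m d = 0` for `j < n`; a monic polynomial orthogonal to all lower powers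
has `∫ |Φ_n|² dσ = ∫ Φ_n z̄^n dσ = δ + m n d`. All coefficients are nonnegative, so the triangle
inequality bounds `|Φ_n|` on the circle by `Φ_n(1)`.
-/

open MeasureTheory Polynomial ComplexConjugate

/-- Arclength measure on the unit circle `{z : ℂ | |z| = 1}`, of total mass `2π`. -/
noncomputable def arcMeasure : Measure ℂ :=
  (volume.restrict (Set.Ioc (-Real.pi) Real.pi)).map (fun θ : ℝ => Complex.exp (Complex.I * θ))

lemma integrable_arcMeasure {E : Type*} [NormedAddCommGroup E] {f : ℂ → E} (hf : Continuous f) :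
    Integrable f arcMeasure := by
  rw [arcMeasure, integrable_map_measure hf.aestronglyMeasurable (by fun_prop)]
  exact (hf.comp (by fun_prop)).integrableOn_Ioc

lemma integral_arcMeasure_pow_mul_conj_pow (a b : ℕ) :
    ∫ z, z ^ a * conj (z ^ b) ∂arcMeasure = if a = b then (2 * Real.pi : ℂ) else 0 := by
  set k : ℤ := a - b
  have hexp : ∀ θ : ℝ, Complex.exp (Complex.I * θ) ^ a * conj (Complex.exp (Complex.I * θ) ^ b)
      = Complex.exp ((k * Complex.I) * θ) := fun θ => by
    rw [← Complex.exp_nat_mul, ← Complex.exp_nat_mul, ← Complex.exp_conj, ← Complex.exp_add,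
      map_mul, map_mul, Complex.conj_I, Complex.conj_ofReal, Complex.conj_natCast]
    push_cast [k]
    ring_nf
  rw [arcMeasure, integral_map (by fun_prop) (Continuous.aestronglyMeasurable (by fun_prop))]
  simp_rw [hexp]
  rw [← intervalIntegral.integral_of_le (by linarith [Real.pi_pos])]
  split_ifs with hab
  · simp only [k, hab, sub_self, Int.cast_zero, zero_mul, Complex.exp_zero,
      intervalIntegral.integral_const, sub_neg_eq_add, Complex.real_smul, Complex.ofReal_add,
      mul_one]
    ring
  · have hk : (k * Complex.I) ≠ 0 := by simpa [k, sub_eq_zero] using hab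
    rw [integral_exp_mul_complex hk, div_eq_zero_iff, sub_eq_zero]
    left
    have hshift : k * Complex.I * (Real.pi : ℝ)
        = k * Complex.I * ((-Real.pi : ℝ) : ℂ) + k * (2 * Real.pi * Complex.I) := by
      push_cast
      ring
    rw [hshift, Complex.exp_add, Complex.exp_int_mul_two_pi_mul_I, mul_one]

lemma integral_arcMeasure_eval_mul_conj_pow (p : ℂ[X]) (j : ℕ) :
    ∫ z, p.eval z * conj (z ^ j) ∂arcMeasure = 2 * Real.pi * p.coeff j := by
  have hN : p.natDegree < p.natDegree + j + 1 := by omega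
  simp_rw [eval_eq_sum_range' hN, Finset.sum_mul, mul_assoc]
  rw [integral_finsetSum _ fun i _ => (integrable_arcMeasure (by fun_prop)).const_mul _]
  simp_rw [integral_const_mul, integral_arcMeasure_pow_mul_conj_pow, mul_ite, mul_zero]
  rw [Finset.sum_ite_eq', if_pos (by simp)]
  ring

section WeightedCircleMeasure

variable {ι E : Type*} [NormedAddCommGroup E] (s : Finset ι) (ε : ι → ℂ)

lemma integrable_smul_arcMeasure_add_sum_smul_dirac {f : ℂ → E} (hf : Continuous f)
    {a b : ENNReal} (ha : a ≠ ⊤) (hb : b ≠ ⊤) :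
    Integrable f (a • arcMeasure + ∑ k ∈ s, b • Measure.dirac (ε k)) :=
  ((integrable_arcMeasure hf).smul_measure ha).add_measure <|
    integrable_finsetSum_measure.2 fun _ _ =>
      (integrable_dirac enorm_lt_top).smul_measure hb

lemma integral_smul_arcMeasure_add_sum_smul_dirac [NormedSpace ℝ E] [CompleteSpace E] {f : ℂ → E}
    (hf : Continuous f) {a b : ℝ} (ha : 0 ≤ a) (hb : 0 ≤ b) :
    ∫ z, f z ∂(ENNReal.ofReal a • arcMeasure + ∑ k ∈ s, ENNReal.ofReal b • Measure.dirac (ε k))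
      = a • ∫ z, f z ∂arcMeasure + b • ∑ k ∈ s, f (ε k) := by
  have hdirac : ∀ k ∈ s, Integrable f (ENNReal.ofReal b • Measure.dirac (ε k)) :=
    fun _ _ => (integrable_dirac enorm_lt_top).smul_measure ENNReal.ofReal_ne_top
  rw [integral_add_measure ((integrable_arcMeasure hf).smul_measure ENNReal.ofReal_ne_top)
      (integrable_finsetSum_measure.2 hdirac), integral_finsetSum_measure hdirac,
    integral_smul_measure, ENNReal.toReal_ofReal ha, Finset.smul_sum]
  simp only [integral_smul_measure, integral_dirac, ENNReal.toReal_ofReal hb]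

end WeightedCircleMeasure

lemma IsPrimitiveRoot.sum_Icc_pow_pow {K : Type*} [Field K] {ω : K} {n : ℕ}
    (hω : IsPrimitiveRoot ω (n + 1)) (i : ℕ) :
    ∑ k ∈ Finset.Icc 1 n, (ω ^ k) ^ i = if n + 1 ∣ i then (n : K) else -1 := by
  simp_rw [← pow_mul, mul_comm _ i, pow_mul]
  split_ifs with hi
  · simp [hω.pow_eq_one_iff_dvd _ |>.2 hi]
  · have hne : ω ^ i ≠ 1 := mt (hω.pow_eq_one_iff_dvd _).1 hi
    have hgeom : ∑ k ∈ Finset.range (n + 1), (ω ^ i) ^ k = 0 := by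
      rw [geom_sum_eq hne, ← pow_mul, mul_comm, pow_mul, hω.pow_eq_one, one_pow, sub_self,
        zero_div]
    rw [Finset.range_eq_Ico, Finset.sum_eq_sum_Ico_succ_bot (by omega),
      Finset.Ico_add_one_right_eq_Icc] at hgeom
    linear_combination hgeom

lemma Complex.conj_eq_pow_of_pow_succ_eq_one {ζ : ℂ} {n : ℕ} (h : ζ ^ (n + 1) = 1) :
    conj ζ = ζ ^ n := by
  rw [← Complex.inv_eq_conj (Complex.norm_eq_one_of_pow_eq_one h n.succ_ne_zero)]
  exact inv_eq_of_mul_eq_one_right (by rw [← pow_succ', h])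

lemma Complex.exp_two_pi_I_mul_div_eq_pow (n k : ℕ) :
    Complex.exp (2 * Real.pi * Complex.I * k / (n + 1))
      = Complex.exp (2 * Real.pi * Complex.I / (n + 1 : ℕ)) ^ k := by
  rw [← Complex.exp_nat_mul]
  push_cast
  ring_nf

lemma integral_eval_mul_conj_eval_of_orthogonal {μ : Measure ℂ} {p : ℂ[X]} (hp : p.Monic)
    (hint : ∀ j, Integrable (fun z => p.eval z * conj (z ^ j)) μ)
    (horth : ∀ j < p.natDegree, ∫ z, p.eval z * conj (z ^ j) ∂μ = 0) :
    ∫ z, p.eval z * conj (p.eval z) ∂μ = ∫ z, p.eval z * conj (z ^ p.natDegree) ∂μ := by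
  have hexpand : ∀ z, p.eval z * conj (p.eval z)
      = ∑ j ∈ Finset.range (p.natDegree + 1), conj (p.coeff j) * (p.eval z * conj (z ^ j)) := by
    intro z
    have hconj : conj (p.eval z)
        = ∑ j ∈ Finset.range (p.natDegree + 1), conj (p.coeff j) * conj (z ^ j) := by
      simp only [eval_eq_sum_range, map_sum, map_mul]
    rw [hconj, Finset.mul_sum]
    exact Finset.sum_congr rfl fun j _ => by ring
  simp_rw [hexpand]
  rw [integral_finsetSum _ fun j _ => (hint j).const_mul _]
  simp_rw [integral_const_mul]
  have hlower : ∀ j ∈ Finset.range p.natDegree,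
      conj (p.coeff j) * ∫ z, p.eval z * conj (z ^ j) ∂μ = 0 := fun j hj => by
    rw [horth j (Finset.mem_range.1 hj), mul_zero]
  rw [Finset.sum_range_succ, Finset.sum_eq_zero hlower, hp.coeff_natDegree, map_one, one_mul,
    zero_add]

noncomputable def extremalPoly (c d : ℂ) (n : ℕ) : ℂ[X] :=
  C c * ∑ j ∈ Finset.range (n + 1), X ^ j + C d * X ^ n

section ExtremalPoly

variable (c d : ℂ) (n : ℕ)

lemma coeff_extremalPoly_of_lt {j : ℕ} (hj : j < n) : (extremalPoly c d n).coeff j = c := by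
  simp [extremalPoly, coeff_X_pow, hj.ne, hj.trans n.lt_succ_self]

lemma coeff_extremalPoly_self : (extremalPoly c d n).coeff n = c + d := by
  simp [extremalPoly, coeff_X_pow]

lemma natDegree_extremalPoly_le : (extremalPoly c d n).natDegree ≤ n := by
  refine natDegree_add_le_of_degree_le ((natDegree_C_mul_le _ _).trans ?_)
    ((natDegree_C_mul_le _ _).trans (natDegree_X_pow_le n))
  exact natDegree_sum_le_of_forall_le _ _ fun j hj =>
    (natDegree_X_pow_le j).trans (Nat.lt_succ_iff.1 (Finset.mem_range.1 hj))

variable {c d}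

lemma natDegree_extremalPoly (h : c + d = 1) : (extremalPoly c d n).natDegree = n :=
  natDegree_eq_of_le_of_coeff_ne_zero (natDegree_extremalPoly_le c d n)
    (by rw [coeff_extremalPoly_self, h]; exact one_ne_zero)

lemma monic_extremalPoly (h : c + d = 1) : (extremalPoly c d n).Monic := by
  rw [Monic, leadingCoeff, natDegree_extremalPoly n h, coeff_extremalPoly_self, h]

variable (c d)

lemma eval_one_extremalPoly : (extremalPoly c d n).eval 1 = c * (n + 1) + d := by
  simp [extremalPoly]

lemma eval_extremalPoly_of_pow_eq_one {ζ : ℂ} (h : ζ ^ (n + 1) = 1) (hζ : ζ ≠ 1) :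
    (extremalPoly c d n).eval ζ = d * ζ ^ n := by
  simp [extremalPoly, eval_finsetSum, geom_sum_eq hζ, h]

lemma norm_eval_extremalPoly_le {c d : ℝ} (hc : 0 ≤ c) (hd : 0 ≤ d) {z : ℂ} (hz : ‖z‖ ≤ 1) :
    ‖(extremalPoly c d n).eval z‖ ≤ c * (n + 1) + d := by
  have hpow : ∀ j, ‖z ^ j‖ ≤ 1 := fun j => by
    rw [norm_pow]
    exact pow_le_one₀ (norm_nonneg z) hz
  have hgeom : ‖∑ j ∈ Finset.range (n + 1), z ^ j‖ ≤ n + 1 :=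
    (norm_sum_le _ _).trans ((Finset.sum_le_sum fun j _ => hpow j).trans (by simp))
  simp only [extremalPoly, eval_add, eval_mul, eval_C, eval_finsetSum, eval_pow, eval_X]
  refine (norm_add_le _ _).trans (add_le_add ?_ ?_)
  · rw [norm_mul, Complex.norm_real, Real.norm_of_nonneg hc]
    exact mul_le_mul_of_nonneg_left hgeom hc
  · rw [norm_mul, Complex.norm_real, Real.norm_of_nonneg hd]
    exact mul_le_of_le_one_right hd (hpow n)

end ExtremalPoly

noncomputable def arcPlusRootsMeasure (δ m : ℝ) (n : ℕ) (ω : ℂ) : Measure ℂ :=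
  ENNReal.ofReal (δ / (2 * Real.pi)) • arcMeasure +
    ∑ k ∈ Finset.Icc 1 n, ENNReal.ofReal m • Measure.dirac (ω ^ k)

section ArcPlusRootsMeasure

variable {δ m : ℝ} {n : ℕ} {ω : ℂ}

lemma integrable_arcPlusRootsMeasure {f : ℂ → ℂ} (hf : Continuous f) :
    Integrable f (arcPlusRootsMeasure δ m n ω) :=
  integrable_smul_arcMeasure_add_sum_smul_dirac _ _ hf ENNReal.ofReal_ne_top ENNReal.ofReal_ne_top

lemma integral_eval_extremalPoly_mul_conj_pow (hδ : 0 ≤ δ) (hm : 0 ≤ m)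
    (hω : IsPrimitiveRoot ω (n + 1)) (c d : ℂ) (j : ℕ) :
    ∫ z, (extremalPoly c d n).eval z * conj (z ^ j) ∂arcPlusRootsMeasure δ m n ω
      = δ * (extremalPoly c d n).coeff j + m * d * if n + 1 ∣ j + 1 then (n : ℂ) else -1 := by
  have hroots : ∀ k ∈ Finset.Icc 1 n, (extremalPoly c d n).eval (ω ^ k) * conj ((ω ^ k) ^ j)
      = d * conj ((ω ^ k) ^ (j + 1)) := by
    intro k hk
    have hk1 : (ω ^ k) ^ (n + 1) = 1 := by rw [pow_right_comm, hω.pow_eq_one, one_pow]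
    obtain ⟨hk0, hkn⟩ := Finset.mem_Icc.1 hk
    rw [eval_extremalPoly_of_pow_eq_one _ _ _ hk1 (hω.pow_ne_one_of_pos_of_lt (by omega)
      (by omega)), ← Complex.conj_eq_pow_of_pow_succ_eq_one hk1, pow_succ', map_mul, mul_assoc]
  have hscale : ((δ / (2 * Real.pi) : ℝ) : ℂ) * (2 * Real.pi) = δ := by
    push_cast
    field_simp
  have hcont : Continuous fun z => (extremalPoly c d n).eval z * conj (z ^ j) :=
    (Polynomial.continuous _).mul (by fun_prop)
  rw [arcPlusRootsMeasure, integral_smul_arcMeasure_add_sum_smul_dirac _ _ hcont (by positivity) hm,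
    integral_arcMeasure_eval_mul_conj_pow, Finset.sum_congr rfl hroots, ← Finset.mul_sum,
    ← map_sum, hω.sum_Icc_pow_pow]
  simp only [Complex.real_smul, apply_ite conj, map_natCast, map_neg, map_one]
  linear_combination (extremalPoly c d n).coeff j * hscale

lemma integral_eval_extremalPoly_mul_conj_pow_of_lt {c d : ℂ} (hδ : 0 ≤ δ) (hm : 0 ≤ m)
    (hω : IsPrimitiveRoot ω (n + 1)) (hcd : δ * c = m * d) {j : ℕ} (hj : j < n) :
    ∫ z, (extremalPoly c d n).eval z * conj (z ^ j) ∂arcPlusRootsMeasure δ m n ω = 0 := by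
  rw [integral_eval_extremalPoly_mul_conj_pow hδ hm hω, coeff_extremalPoly_of_lt _ _ _ hj,
    if_neg (Nat.not_dvd_of_pos_of_lt (by omega) (by omega)), hcd]
  ring

lemma integral_norm_eval_extremalPoly_sq {c d : ℝ} (hδ : 0 ≤ δ) (hm : 0 ≤ m)
    (hω : IsPrimitiveRoot ω (n + 1)) (h1 : c + d = 1) (hcd : δ * c = m * d) :
    ∫ z, ‖(extremalPoly c d n).eval z‖ ^ 2 ∂arcPlusRootsMeasure δ m n ω = δ + m * n * d := by
  have h1' : (c : ℂ) + d = 1 := by exact_mod_cast h1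
  have hcd' : (δ : ℂ) * c = m * d := by exact_mod_cast hcd
  have hdeg := natDegree_extremalPoly n h1'
  apply Complex.ofReal_injective
  rw [← integral_complex_ofReal]
  push_cast
  simp_rw [← Complex.mul_conj']
  rw [integral_eval_mul_conj_eval_of_orthogonal (monic_extremalPoly n h1')
      (fun j => integrable_arcPlusRootsMeasure ((Polynomial.continuous _).mul (by fun_prop)))
      (fun j hj => integral_eval_extremalPoly_mul_conj_pow_of_lt hδ hm hω hcd' (hdeg ▸ hj)),
    hdeg, integral_eval_extremalPoly_mul_conj_pow hδ hm hω, coeff_extremalPoly_self, h1',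
    if_pos dvd_rfl]
  ring

end ArcPlusRootsMeasure

theorem explicit_extremal_polynomial_general (δ m : ℝ) (hδ : 0 < δ) (hm : 0 < m)
    (n : ℕ)
    (ε : ℕ → ℂ)
    (hε : ∀ k, ε k = Complex.exp (2 * Real.pi * Complex.I * k / (n + 1)))
    (σ : Measure ℂ)
    (hσ : σ = ENNReal.ofReal (δ / (2 * Real.pi)) • arcMeasure +
      ∑ k ∈ Finset.Icc 1 n, ENNReal.ofReal m • Measure.dirac (ε k))
    (Φ : Polynomial ℂ)
    (hΦ : Φ = Polynomial.C ((m / (δ + m) : ℝ) : ℂ) * (∑ j ∈ Finset.range (n + 1), X ^ j) +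
      Polynomial.C ((δ / (δ + m) : ℝ) : ℂ) * X ^ n) :
    Φ.Monic ∧ Φ.natDegree = n ∧
    (∀ j < n, ∫ z, Φ.eval z * conj (z ^ j) ∂σ = 0) ∧
    Φ.eval 1 = ((1 + m * n / (δ + m) : ℝ) : ℂ) ∧
    (∀ z : ℂ, ‖z‖ = 1 → ‖Φ.eval z‖ ≤ 1 + m * n / (δ + m)) ∧
    ∫ z, ‖Φ.eval z‖ ^ 2 ∂σ = δ * (1 + m * n / (δ + m)) := by
  have hδm : δ + m ≠ 0 := (add_pos hδ hm).ne'
  set c : ℝ := m / (δ + m) with hc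
  set d : ℝ := δ / (δ + m) with hd
  have h1 : c + d = 1 := by
    rw [hc, hd]
    field_simp
    ring
  have hcd : δ * c = m * d := by ring
  have hval : 1 + m * n / (δ + m) = c * (n + 1) + d := by linear_combination -h1
  obtain ⟨ω, hω, hεω⟩ : ∃ ω : ℂ, IsPrimitiveRoot ω (n + 1) ∧ ∀ k, ε k = ω ^ k :=
    ⟨_, Complex.isPrimitiveRoot_exp (n + 1) n.succ_ne_zero,
      fun k => by rw [hε, Complex.exp_two_pi_I_mul_div_eq_pow]⟩
  replace hσ : σ = arcPlusRootsMeasure δ m n ω := by simp_rw [hσ, hεω, arcPlusRootsMeasure]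
  replace hΦ : Φ = extremalPoly c d n := hΦ
  subst hσ hΦ
  have h1' : (c : ℂ) + d = 1 := by exact_mod_cast h1
  refine ⟨monic_extremalPoly n h1', natDegree_extremalPoly n h1',
    fun j => integral_eval_extremalPoly_mul_conj_pow_of_lt hδ.le hm.le hω (by exact_mod_cast hcd),
    ?_, fun z hz => ?_, ?_⟩
  · rw [eval_one_extremalPoly, hval]
    push_cast
    ring
  · rw [hval]
    exact norm_eval_extremalPoly_le n (by positivity) (by positivity) hz.le
  · rw [integral_norm_eval_extremalPoly_sq hδ.le hm.le hω h1 hcd, hval]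
    linear_combination n * hcd - δ * h1

/-- for `dσ = (δ/(2π))dθ + m Σ_{k=1}^n δ_{ε_k}` with `ε_k` the nontrivial
`(n+1)`-st roots of unity, the polynomial
`Φ_n = (m/(δ+m))(1+z+…+z^n) + (δ/(δ+m)) z^n` is monic of degree `n`, orthogonal to `z^j`
for `j < n`, attains its sup-norm `1 + mn/(δ+m)` at `z = 1`, and
`∫|Φ_n|² dσ = δ(1 + mn/(δ+m))`. -/
theorem explicit_extremal_polynomial (δ m : ℝ) (hδ : 0 < δ) (hm : 0 < m)
    (n : ℕ) (hn : 1 ≤ n)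
    (ε : ℕ → ℂ)
    (hε : ∀ k, ε k = Complex.exp (2 * Real.pi * Complex.I * k / (n + 1)))
    (σ : Measure ℂ)
    (hσ : σ = ENNReal.ofReal (δ / (2 * Real.pi)) • arcMeasure +
      ∑ k ∈ Finset.Icc 1 n, ENNReal.ofReal m • Measure.dirac (ε k))
    (Φ : Polynomial ℂ)
    (hΦ : Φ = Polynomial.C ((m / (δ + m) : ℝ) : ℂ) * (∑ j ∈ Finset.range (n + 1), X ^ j) +
      Polynomial.C ((δ / (δ + m) : ℝ) : ℂ) * X ^ n) :
    Φ.Monic ∧ Φ.natDegree = n ∧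
    (∀ j < n, ∫ z, Φ.eval z * conj (z ^ j) ∂σ = 0) ∧
    Φ.eval 1 = ((1 + m * n / (δ + m) : ℝ) : ℂ) ∧
    (∀ z : ℂ, ‖z‖ = 1 → ‖Φ.eval z‖ ≤ 1 + m * n / (δ + m)) ∧
    ∫ z, ‖Φ.eval z‖ ^ 2 ∂σ = δ * (1 + m * n / (δ + m)) :=
  explicit_extremal_polynomial_general δ m hδ hm n ε hε σ hσ Φ hΦ
end
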